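/- Let d ≥ 2 be even and let l be a continuous linear functional on C(S^{d−1}) such that l(V_g b) = l(b) for every g ∈ Sp(d,ℝ) and every b ∈ C(S^{d−1}). Then for every multi-index n ∈ ℕ^d and every k with 1 ≤ k ≤ d/2, (n_{2k} + 1) · l(b_{n + 2e_{2k−1}}) = (n_{2k−1} + 1) · l(b_{n + 2e_{2k}}). -/

import Mathlib

open MeasureTheory

/-- The standard symplectic form matrix `Ω`: block-diagonal with `d/2` diagonal blocks
`((0, 1), (-1, 0))`. -/
def Omega (d : ℕ) : Matrix (Fin d) (Fin d) ℝ :=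
  Matrix.of fun i j =>
    if i.val % 2 = 0 ∧ j.val = i.val + 1 then 1
    else if j.val % 2 = 0 ∧ i.val = j.val + 1 then -1
    else 0

attribute [local instance] Classical.propDecidable

/-- The homogeneous (degree-zero) extension to `ℝ^d` of a function on the unit sphere:
`homog b t = b (t / ‖t‖)` for `t ≠ 0`, and `0` at `t = 0`. -/
noncomputable def homog {d : ℕ}
    (b : C(Metric.sphere (0 : EuclideanSpace ℝ (Fin d)) 1, ℂ))
    (t : EuclideanSpace ℝ (Fin d)) : ℂ :=
  if h : ‖t‖⁻¹ • t ∈ Metric.sphere (0 : EuclideanSpace ℝ (Fin d)) 1 then b ⟨_, h⟩ else 0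

/-!
Rotations in a coordinate plane `(x_{2k-1}, x_{2k})` are both orthogonal and symplectic. Being
orthogonal, they act on `C(S^{d-1})` by composition, so `l` is constant along the orbit
`θ ↦ b_m ∘ R_θ` of the monomial `b_m` with `m = n + e_{2k-1} + e_{2k}`. This orbit is a polynomial
in `cos θ, sin θ` with values in the Banach algebra `C(S^{d-1})`, and its derivative at `θ = 0` is
`(n_{2k} + 1) b_{n + 2e_{2k-1}} - (n_{2k-1} + 1) b_{n + 2e_{2k}}`, which `l` must annihilate.
-/

open Matrix

local notation "𝕊" d:max => Metric.sphere (0 : EuclideanSpace ℝ (Fin d)) 1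

noncomputable def planeRotation {d : ℕ} (p q : Fin d) (θ : ℝ) : Matrix (Fin d) (Fin d) ℝ :=
  1 + (Real.cos θ - 1) • (single p p 1 + single q q 1) + Real.sin θ • (single q p 1 - single p q 1)

section Symplectic

variable {d : ℕ} {p q : Fin d}

lemma Omega_mul_single_fst (hp : p.val % 2 = 0) (hq : q.val = p.val + 1) (j : Fin d) :
    Omega d * single p j (1 : ℝ) = -single q j 1 := by
  ext a b
  by_cases hb : b = j
  · subst hb
    rw [mul_single_apply_same]
    simp only [Omega, of_apply, mul_one, single, Matrix.neg_apply, Fin.ext_iff]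
    grind
  · rw [mul_single_apply_of_ne (hbj := hb)]
    simp [single, Ne.symm hb]

lemma Omega_mul_single_snd (hp : p.val % 2 = 0) (hq : q.val = p.val + 1) (j : Fin d) :
    Omega d * single q j (1 : ℝ) = single p j 1 := by
  ext a b
  by_cases hb : b = j
  · subst hb
    rw [mul_single_apply_same]
    simp only [Omega, of_apply, mul_one, single, Fin.ext_iff]
    grind
  · rw [mul_single_apply_of_ne (hbj := hb)]
    simp [single, Ne.symm hb]

lemma single_fst_mul_Omega (hp : p.val % 2 = 0) (hq : q.val = p.val + 1) (i : Fin d) :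
    single i p (1 : ℝ) * Omega d = single i q 1 := by
  ext a b
  by_cases ha : a = i
  · subst ha
    rw [single_mul_apply_same]
    simp only [Omega, of_apply, one_mul, single, Fin.ext_iff]
    grind
  · rw [single_mul_apply_of_ne (h := ha)]
    simp [single, Ne.symm ha]

lemma single_snd_mul_Omega (hp : p.val % 2 = 0) (hq : q.val = p.val + 1) (i : Fin d) :
    single i q (1 : ℝ) * Omega d = -single i p 1 := by
  ext a b
  by_cases ha : a = i
  · subst ha
    rw [single_mul_apply_same]
    simp only [Omega, of_apply, one_mul, single, Matrix.neg_apply, Fin.ext_iff]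
    grind
  · rw [single_mul_apply_of_ne (h := ha)]
    simp [single, Ne.symm ha]

lemma planeRotation_symplectic (hp : p.val % 2 = 0) (hq : q.val = p.val + 1) (θ : ℝ) :
    (planeRotation p q θ)ᵀ * Omega d * planeRotation p q θ = Omega d := by
  have hpq : p ≠ q := fun h => by rw [h] at hq; omega
  have hpq₁ (i j : Fin d) (a b : ℝ) : single i p a * single q j b = 0 :=
    single_mul_single_of_ne _ _ _ _ hpq _
  have hpq₂ (i j : Fin d) (a b : ℝ) : single i q a * single p j b = 0 :=
    single_mul_single_of_ne _ _ _ _ hpq.symm _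
  simp only [planeRotation, transpose_add, transpose_one, transpose_smul, transpose_sub,
    transpose_single, add_mul, mul_add, smul_mul_assoc, mul_smul_comm, one_mul, mul_one,
    sub_mul, mul_sub, Omega_mul_single_fst hp hq, Omega_mul_single_snd hp hq,
    single_fst_mul_Omega hp hq, single_snd_mul_Omega hp hq, single_mul_single_same, hpq₁, hpq₂,
    neg_mul, smul_neg, sub_zero, zero_sub, neg_zero, add_zero,
    zero_add]
  match_scalars <;> nlinarith [Real.sin_sq_add_cos_sq θ]

end Symplectic

section Rotation

variable {d : ℕ} {p q : Fin d}

lemma toEuclideanLin_planeRotation_apply (hpq : p ≠ q) (θ : ℝ) (t : EuclideanSpace ℝ (Fin d))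
    (i : Fin d) :
    toEuclideanLin (planeRotation p q θ) t i =
      if i = p then Real.cos θ * t p - Real.sin θ * t q
      else if i = q then Real.sin θ * t p + Real.cos θ * t q
      else t i := by
  change (planeRotation p q θ *ᵥ (fun j => t j)) i = _
  simp only [planeRotation, add_mulVec, smul_mulVec, sub_mulVec, one_mulVec, single_mulVec,
    one_mul]
  by_cases hip : i = p
  · subst hip
    simp [hpq]
    ring
  · by_cases hiq : i = q
    · subst hiq
      simp [Ne.symm hpq]
      ring
    · simp [hip, hiq]

lemma norm_toEuclideanLin_planeRotation (hpq : p ≠ q) (θ : ℝ) (t : EuclideanSpace ℝ (Fin d)) :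
    ‖toEuclideanLin (planeRotation p q θ) t‖ = ‖t‖ := by
  have split (v : Fin d → ℝ) :
      ∑ i, v i = v p + v q + ∑ i ∈ (Finset.univ.erase p).erase q, v i := by
    rw [← Finset.add_sum_erase _ v (Finset.mem_univ p),
      ← Finset.add_sum_erase (Finset.univ.erase p) v
        (Finset.mem_erase.2 ⟨Ne.symm hpq, Finset.mem_univ q⟩), add_assoc]
  simp only [EuclideanSpace.norm_eq, Real.norm_eq_abs, sq_abs]
  rw [split, split (fun i => t i ^ 2)]
  have hrest : ∀ i ∈ (Finset.univ.erase p).erase q,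
      toEuclideanLin (planeRotation p q θ) t i ^ 2 = t i ^ 2 := by
    intro i hi
    obtain ⟨hiq, hip, -⟩ := Finset.mem_erase.1 hi |>.imp_right Finset.mem_erase.1
    rw [toEuclideanLin_planeRotation_apply hpq, if_neg hip, if_neg hiq]
  rw [Finset.sum_congr rfl hrest, toEuclideanLin_planeRotation_apply hpq,
    toEuclideanLin_planeRotation_apply hpq, if_pos rfl, if_neg (Ne.symm hpq), if_pos rfl]
  congr 2
  linear_combination (t p ^ 2 + t q ^ 2) * Real.sin_sq_add_cos_sq θ

noncomputable def planeRotationSphere (hpq : p ≠ q) (θ : ℝ) : C(𝕊 d, 𝕊 d) :=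
  ⟨fun t => ⟨toEuclideanLin (planeRotation p q θ) t, mem_sphere_zero_iff_norm.2 <|
      (norm_toEuclideanLin_planeRotation hpq θ t).trans (mem_sphere_zero_iff_norm.1 t.2)⟩,
    ((LinearMap.continuous_of_finiteDimensional _).comp continuous_subtype_val).subtype_mk _⟩

end Rotation

section SphereFunctions

variable {d : ℕ}

noncomputable def sphereCoord (i : Fin d) : C(𝕊 d, ℂ) :=
  ⟨fun t => ((t : EuclideanSpace ℝ (Fin d)) i : ℂ),
    Complex.continuous_ofReal.comp ((PiLp.continuous_apply 2 _ i).comp continuous_subtype_val)⟩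

noncomputable def sphereMonomial (m : Fin d → ℕ) : C(𝕊 d, ℂ) :=
  ∏ i, sphereCoord i ^ m i

lemma homog_of_mem_sphere (b : C(𝕊 d, ℂ)) {t : EuclideanSpace ℝ (Fin d)} (ht : t ∈ 𝕊 d) :
    homog b t = b ⟨t, ht⟩ := by
  have hnorm : ‖t‖ = 1 := mem_sphere_zero_iff_norm.1 ht
  rw [homog, dif_pos (by simp [hnorm])]
  congr
  simp [hnorm]

lemma sphereMonomial_eq_mul {p q : Fin d} (hpq : p ≠ q) (m n : Fin d → ℕ)
    (hmn : ∀ i, i ≠ p → i ≠ q → m i = n i) :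
    sphereMonomial m =
      sphereCoord p ^ m p * sphereCoord q ^ m q *
        ∏ i ∈ (Finset.univ.erase p).erase q, sphereCoord i ^ n i := by
  rw [sphereMonomial, ← Finset.mul_prod_erase Finset.univ _ (Finset.mem_univ p),
    ← Finset.mul_prod_erase (Finset.univ.erase p) _
      (Finset.mem_erase.2 ⟨Ne.symm hpq, Finset.mem_univ q⟩), ← mul_assoc]
  congr 1
  refine Finset.prod_congr rfl fun i hi => ?_
  obtain ⟨hiq, hip, -⟩ := Finset.mem_erase.1 hi |>.imp_right Finset.mem_erase.1
  rw [hmn i hip hiq]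

end SphereFunctions

section Invariance

variable {d : ℕ}

def IsSpInvariant (l : C(𝕊 d, ℂ) →L[ℂ] ℂ) : Prop :=
  ∀ g : Matrix (Fin d) (Fin d) ℝ, g.transpose * Omega d * g = Omega d →
    ∀ b c : C(𝕊 d, ℂ),
      (∀ t : 𝕊 d, c t = (((‖toEuclideanLin g t‖ ^ d)⁻¹ : ℝ) : ℂ) * homog b (toEuclideanLin g t)) →
      l c = l b

/-- When `g` maps the sphere to itself the factor `‖g t‖ ^ (-d)` is `1`, so `V_g b = b ∘ g`. -/
lemma IsSpInvariant.map_comp {l : C(𝕊 d, ℂ) →L[ℂ] ℂ} (hl : IsSpInvariant l)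
    {g : Matrix (Fin d) (Fin d) ℝ} (hg : g.transpose * Omega d * g = Omega d) (R : C(𝕊 d, 𝕊 d))
    (hR : ∀ t, (R t : EuclideanSpace ℝ (Fin d)) = toEuclideanLin g t) (b : C(𝕊 d, ℂ)) :
    l (b.comp R) = l b := by
  refine hl g hg b _ fun t => ?_
  rw [← hR, mem_sphere_zero_iff_norm.1 (R t).2, homog_of_mem_sphere b (R t).2]
  simp

variable {p q : Fin d} (hpq : p ≠ q) (θ : ℝ)

lemma sphereCoord_fst_comp_planeRotationSphere :
    (sphereCoord p).comp (planeRotationSphere hpq θ) =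
      Real.cos θ • sphereCoord p - Real.sin θ • sphereCoord q := by
  ext t
  simp [sphereCoord, planeRotationSphere, toEuclideanLin_planeRotation_apply hpq]

lemma sphereCoord_snd_comp_planeRotationSphere :
    (sphereCoord q).comp (planeRotationSphere hpq θ) =
      Real.sin θ • sphereCoord p + Real.cos θ • sphereCoord q := by
  ext t
  simp [sphereCoord, planeRotationSphere, toEuclideanLin_planeRotation_apply hpq, Ne.symm hpq]

lemma sphereCoord_comp_planeRotationSphere_of_ne {i : Fin d} (hip : i ≠ p) (hiq : i ≠ q) :
    (sphereCoord i).comp (planeRotationSphere hpq θ) = sphereCoord i := by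
  ext t
  simp [sphereCoord, planeRotationSphere, toEuclideanLin_planeRotation_apply hpq, hip, hiq]

lemma sphereMonomial_comp_planeRotationSphere (m n : Fin d → ℕ)
    (hmn : ∀ i, i ≠ p → i ≠ q → m i = n i) :
    (sphereMonomial m).comp (planeRotationSphere hpq θ) =
      (Real.cos θ • sphereCoord p - Real.sin θ • sphereCoord q) ^ m p *
        (Real.sin θ • sphereCoord p + Real.cos θ • sphereCoord q) ^ m q *
        ∏ i ∈ (Finset.univ.erase p).erase q, sphereCoord i ^ n i := by
  rw [sphereMonomial_eq_mul hpq m n hmn]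
  change ContinuousMap.compMonoidHom' (planeRotationSphere hpq θ) _ = _
  simp only [map_mul, map_pow, map_prod, ContinuousMap.compMonoidHom'_apply,
    sphereCoord_fst_comp_planeRotationSphere, sphereCoord_snd_comp_planeRotationSphere]
  congr 1
  refine Finset.prod_congr rfl fun i hi => ?_
  obtain ⟨hiq, hip, -⟩ := Finset.mem_erase.1 hi |>.imp_right Finset.mem_erase.1
  rw [sphereCoord_comp_planeRotationSphere_of_ne hpq θ hip hiq]

end Invariance

lemma hasDerivAt_rotated_pow_mul {A : Type*} [NormedCommRing A] [NormedAlgebra ℝ A]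
    (X Y Z : A) (a b : ℕ) :
    HasDerivAt (fun θ : ℝ => (Real.cos θ • X - Real.sin θ • Y) ^ (a + 1) *
        (Real.sin θ • X + Real.cos θ • Y) ^ (b + 1) * Z)
      ((b + 1) • (X ^ (a + 2) * Y ^ b * Z) - (a + 1) • (X ^ a * Y ^ (b + 2) * Z)) 0 := by
  have hu : HasDerivAt (fun θ : ℝ => Real.cos θ • X - Real.sin θ • Y) (-Y) 0 := by
    simpa using ((Real.hasDerivAt_cos 0).smul_const X).fun_sub ((Real.hasDerivAt_sin 0).smul_const Y)
  have hv : HasDerivAt (fun θ : ℝ => Real.sin θ • X + Real.cos θ • Y) X 0 := by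
    simpa using ((Real.hasDerivAt_sin 0).smul_const X).fun_add ((Real.hasDerivAt_cos 0).smul_const Y)
  convert ((hu.fun_pow (a + 1)).fun_mul (hv.fun_pow (b + 1))).mul_const Z using 1
  simp only [Real.cos_zero, Real.sin_zero, one_smul, zero_smul, sub_zero, zero_add,
    add_tsub_cancel_right, nsmul_eq_mul]
  push_cast
  ring

lemma ContinuousLinearMap.map_eq_zero_of_hasDerivAt_of_comp_const {E F : Type*}
    [NormedAddCommGroup E] [NormedSpace ℝ E] [NormedAddCommGroup F] [NormedSpace ℝ F]
    (l : E →L[ℝ] F) {f : ℝ → E} {f' : E} {x : ℝ} (hf : HasDerivAt f f' x)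
    (hconst : ∀ y, l (f y) = l (f x)) : l f' = 0 := by
  have h := l.hasFDerivAt.comp_hasDerivAt x hf
  rw [show l ∘ f = fun _ => l (f x) from funext hconst] at h
  exact h.unique (hasDerivAt_const x _)

theorem IsSpInvariant.mul_map_sphereMonomial_add_single {d : ℕ} {l : C(𝕊 d, ℂ) →L[ℂ] ℂ}
    (hl : IsSpInvariant l) {p q : Fin d} (hp : p.val % 2 = 0) (hq : q.val = p.val + 1)
    (n : Fin d → ℕ) :
    ((n q : ℂ) + 1) * l (sphereMonomial (n + Pi.single p 2)) =
      ((n p : ℂ) + 1) * l (sphereMonomial (n + Pi.single q 2)) := by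
  have hpq : p ≠ q := fun h => by rw [h] at hq; omega
  set X := sphereCoord (d := d) p
  set Y := sphereCoord (d := d) q
  set Z := ∏ i ∈ (Finset.univ.erase p).erase q, sphereCoord i ^ n i
  set m := n + Pi.single p 1 + Pi.single q 1
  have hmn : ∀ i, i ≠ p → i ≠ q → m i = n i := fun i hip hiq => by simp [m, hip, hiq]
  have horbit : (fun θ => (sphereMonomial m).comp (planeRotationSphere hpq θ)) =
      fun θ : ℝ => (Real.cos θ • X - Real.sin θ • Y) ^ (n p + 1) *
        (Real.sin θ • X + Real.cos θ • Y) ^ (n q + 1) * Z := by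
    funext θ
    rw [sphereMonomial_comp_planeRotationSphere hpq θ m n hmn]
    simp [m, X, Y, Z, hpq, Ne.symm hpq]
  have hderiv := hasDerivAt_rotated_pow_mul X Y Z (n p) (n q)
  rw [← horbit] at hderiv
  have hzero := (l.restrictScalars ℝ).map_eq_zero_of_hasDerivAt_of_comp_const hderiv fun θ => by
    simp only [ContinuousLinearMap.coe_restrictScalars']
    rw [hl.map_comp (planeRotation_symplectic hp hq θ) _ fun _ => rfl,
      hl.map_comp (planeRotation_symplectic hp hq 0) _ fun _ => rfl]
  rw [sphereMonomial_eq_mul hpq _ n fun i hip _ => by simp [hip],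
    sphereMonomial_eq_mul hpq _ n fun i _ hiq => by simp [hiq]]
  rw [map_sub, map_nsmul, map_nsmul, sub_eq_zero] at hzero
  simpa [Ne.symm hpq, hpq] using hzero

/-- The indices are 0-based: `k'` is `k - 1`, and `2k-1, 2k` become `2k', 2k'+1`. -/
theorem stmt12 {d : ℕ}
    (l : C(Metric.sphere (0 : EuclideanSpace ℝ (Fin d)) 1, ℂ) →L[ℂ] ℂ)
    (hl : ∀ g : Matrix (Fin d) (Fin d) ℝ, g.transpose * Omega d * g = Omega d →
      ∀ b c : C(Metric.sphere (0 : EuclideanSpace ℝ (Fin d)) 1, ℂ),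
        (∀ t : Metric.sphere (0 : EuclideanSpace ℝ (Fin d)) 1,
          c t = (((‖Matrix.toEuclideanLin g t‖ ^ d)⁻¹ : ℝ) : ℂ) *
            homog b (Matrix.toEuclideanLin g t)) →
        l c = l b)
    (n : Fin d → ℕ) (k' : ℕ) (hk : 2 * k' + 1 < d)
    (c₁ c₂ : C(Metric.sphere (0 : EuclideanSpace ℝ (Fin d)) 1, ℂ))
    (hc₁ : ∀ t : Metric.sphere (0 : EuclideanSpace ℝ (Fin d)) 1,
      c₁ t = ∏ i : Fin d, (((t : EuclideanSpace ℝ (Fin d)) i : ℝ) : ℂ) ^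
        (n i + if i = (⟨2 * k', by omega⟩ : Fin d) then 2 else 0))
    (hc₂ : ∀ t : Metric.sphere (0 : EuclideanSpace ℝ (Fin d)) 1,
      c₂ t = ∏ i : Fin d, (((t : EuclideanSpace ℝ (Fin d)) i : ℝ) : ℂ) ^
        (n i + if i = (⟨2 * k' + 1, hk⟩ : Fin d) then 2 else 0)) :
    ((n ⟨2 * k' + 1, hk⟩ : ℂ) + 1) * l c₁ = ((n ⟨2 * k', by omega⟩ : ℂ) + 1) * l c₂ := by
  have h₁ : c₁ = sphereMonomial (n + Pi.single ⟨2 * k', by omega⟩ 2) := by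
    ext t
    simp [hc₁, sphereMonomial, sphereCoord, Pi.single_apply]
  have h₂ : c₂ = sphereMonomial (n + Pi.single ⟨2 * k' + 1, hk⟩ 2) := by
    ext t
    simp [hc₂, sphereMonomial, sphereCoord, Pi.single_apply]
  rw [h₁, h₂]
  exact IsSpInvariant.mul_map_sphereMonomial_add_single hl (Nat.mul_mod_right 2 k') rfl n
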